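/- arXiv:2209.04049 — 2 statements merged into one kernel-verified Lean document; each statement's English description precedes it below -/
import Mathlib

section
/- (Completeness via generalization) Let X be a finite set, F a set of probability mass functions on X, and define the equivalence x ~ x' iff f(x) = f(x') for all f ∈ F. Suppose the ground truth p* ∈ F has support V, the dataset support S ⊆ V meets every ~-equivalence class that meets V, and no two points of S lie in the same class. If p̂ maximizes Σ_x q(x) log p(x) over p ∈ F (q uniform on S), and every f ∈ F is constant on each equivalence class, then p̂(x) > 0 for every x ∈ V. -/
/-!
The ground truth `p*` is positive on `S = supp q`, so its log-likelihood is finite; hence so is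
that of the maximizer `p̂`, which forces `p̂ > 0` on `S`. Every point of `V` is equivalent to a
point of `S`, and `p̂` is constant on equivalence classes.
-/

open Real Finset

/-- Extended-real expected log-likelihood of `p` under `q`, where terms with
`q x > 0` and `p x = 0` are interpreted as `−∞`. -/
noncomputable def eloglik {X : Type*} [Fintype X] (q p : X → ℝ) : EReal :=
  ∑ x, if 0 < q x ∧ p x = 0 then (⊥ : EReal) else ((q x * Real.log (p x) : ℝ) : EReal)

theorem eloglik_eq_bot_iff {X : Type*} [Fintype X] (q p : X → ℝ) :
    eloglik q p = ⊥ ↔ ∃ x, 0 < q x ∧ p x = 0 := by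
  refine WithBot.sum_eq_bot_iff.trans
    ⟨fun ⟨x, _, hx⟩ => ⟨x, ?_⟩, fun ⟨x, hx⟩ => ⟨x, mem_univ x, ?_⟩⟩
  · by_contra h
    rw [if_neg h] at hx
    exact EReal.coe_ne_bot _ hx
  · exact if_pos hx

theorem pos_of_eloglik_le {X : Type*} [Fintype X] {q p p' : X → ℝ} (hp : ∀ x, 0 ≤ p x)
    (hp' : ∀ x, 0 < q x → 0 < p' x) (hle : eloglik q p' ≤ eloglik q p) :
    ∀ x, 0 < q x → 0 < p x := by
  have hp'_ne_bot : eloglik q p' ≠ ⊥ := by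
    rw [Ne, eloglik_eq_bot_iff]
    rintro ⟨x, hqx, hpx⟩
    exact (hp' x hqx).ne' hpx
  have hp_ne_bot : eloglik q p ≠ ⊥ := fun h => hp'_ne_bot (le_bot_iff.mp (h ▸ hle))
  intro x hqx
  refine (hp x).lt_of_ne fun hpx => hp_ne_bot ?_
  exact (eloglik_eq_bot_iff q p).mpr ⟨x, hqx, hpx.symm⟩

theorem generalization_makes_complete_general {X : Type*} [Fintype X] [DecidableEq X]
    (F : Set (X → ℝ))
    (hF : ∀ f ∈ F, (∀ x, 0 ≤ f x) ∧ ∑ x, f x = 1)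
    (equiv : X → X → Prop)
    (pstar : X → ℝ) (hpstarF : pstar ∈ F)
    (V : Set X) (hV : V = {x | 0 < pstar x})
    (S : Finset X) (hSV : ↑S ⊆ V)
    -- S meets every equivalence class meeting V
    (hcover : ∀ x ∈ V, ∃ s ∈ S, equiv x s)
    -- every f ∈ F is constant on each equivalence class
    (hconst : ∀ f ∈ F, ∀ x x', equiv x x' → f x = f x')
    -- q is uniform on S
    (q : X → ℝ) (hq : ∀ x, q x = if x ∈ S then (1 : ℝ) / S.card else 0)
    (phat : X → ℝ) (hphatF : phat ∈ F)
    (hmax : ∀ p ∈ F, eloglik q p ≤ eloglik q phat) :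
    ∀ x ∈ V, 0 < phat x := by
  have hq_pos : ∀ x, 0 < q x ↔ x ∈ S := by
    intro x
    rw [hq x]
    split_ifs with hx
    · simpa [hx] using S.card_pos.mpr ⟨x, hx⟩
    · simpa using hx
  have hpstar_pos : ∀ x, 0 < q x → 0 < pstar x := fun x hqx => by
    simpa [hV] using hSV ((hq_pos x).mp hqx)
  have hphat_pos : ∀ x, 0 < q x → 0 < phat x :=
    pos_of_eloglik_le (hF phat hphatF).1 hpstar_pos (hmax pstar hpstarF)
  intro x hx
  obtain ⟨s, hs, hxs⟩ := hcover x hx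
  rw [hconst phat hphatF x s hxs]
  exact hphat_pos s ((hq_pos s).mpr hs)

theorem generalization_makes_complete {X : Type*} [Fintype X] [DecidableEq X]
    (F : Set (X → ℝ))
    (hF : ∀ f ∈ F, (∀ x, 0 ≤ f x) ∧ ∑ x, f x = 1)
    -- the equivalence: x ~ x' iff all members of F agree on them
    (equiv : X → X → Prop) (hequiv : ∀ x x', equiv x x' ↔ ∀ f ∈ F, f x = f x')
    (pstar : X → ℝ) (hpstarF : pstar ∈ F)
    (V : Set X) (hV : V = {x | 0 < pstar x})
    (S : Finset X) (hSne : S.Nonempty) (hSV : ↑S ⊆ V)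
    -- S meets every equivalence class meeting V
    (hcover : ∀ x ∈ V, ∃ s ∈ S, equiv x s)
    -- no two points of S lie in the same class
    (hsep : ∀ s ∈ S, ∀ s' ∈ S, equiv s s' → s = s')
    -- every f ∈ F is constant on each equivalence class
    (hconst : ∀ f ∈ F, ∀ x x', equiv x x' → f x = f x')
    -- q is uniform on S
    (q : X → ℝ) (hq : ∀ x, q x = if x ∈ S then (1 : ℝ) / S.card else 0)
    (phat : X → ℝ) (hphatF : phat ∈ F)
    (hmax : ∀ p ∈ F, eloglik q p ≤ eloglik q phat) :
    ∀ x ∈ V, 0 < phat x :=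
  generalization_makes_complete_general F hF equiv pstar hpstarF V hV S hSV hcover hconst q hq phat
    hphatF hmax
end

section
/- (Maximum entropy characterization of the Gaussian) Among all probability density functions p on ℝ with mean μ and variance σ², the differential entropy −∫ p log p is maximized uniquely (a.e.) by the Gaussian density N(μ, σ). -/
/-!
Gibbs' inequality: for a density `q > 0` of the same mass as `p`,
`∫ p log p - ∫ p log q = ∫ q · klFun (p / q) ≥ 0`, with equality iff `p = q` a.e.
For the Gaussian `q`, `log q` is a quadratic polynomial in `x - μ`, so `∫ p log q` only depends on
the mass of `p` and its second moment about `μ`; these agree with those of `q`, so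
`∫ p log q = ∫ q log q`.
-/

open Real MeasureTheory

noncomputable def gaussianPdf (μ σ : ℝ) (x : ℝ) : ℝ :=
  (1 / Real.sqrt (2 * π * σ ^ 2)) * Real.exp (-(x - μ) ^ 2 / (2 * σ ^ 2))

open ProbabilityTheory InformationTheory

open scoped NNReal

lemma mul_klFun_div {s : ℝ} (hs : 0 < s) (t : ℝ) :
    s * klFun (t / s) = t * log t - t * log s - t + s := by
  rcases eq_or_ne t 0 with rfl | ht
  · simp [klFun_zero]
  · rw [klFun_apply, log_div ht hs.ne']
    field_simp
    ring

theorem integral_mul_log_le_integral_mul_log {α : Type*} [MeasurableSpace α] {ν : Measure α}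
    {p q : α → ℝ} (hp0 : 0 ≤ᵐ[ν] p) (hq0 : ∀ᵐ x ∂ν, 0 < q x)
    (hp : Integrable p ν) (hq : Integrable q ν) (hpq : ∫ x, p x ∂ν = ∫ x, q x ∂ν)
    (hplogp : Integrable (fun x => p x * log (p x)) ν)
    (hplogq : Integrable (fun x => p x * log (q x)) ν) :
    ∫ x, p x * log (q x) ∂ν ≤ ∫ x, p x * log (p x) ∂ν ∧
      (∫ x, p x * log (q x) ∂ν = ∫ x, p x * log (p x) ∂ν ↔ p =ᵐ[ν] q) := by
  set f : α → ℝ := fun x => q x * klFun (p x / q x)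
  have hf_eq : f =ᵐ[ν] fun x => p x * log (p x) - p x * log (q x) - p x + q x := by
    filter_upwards [hq0] with x hx using mul_klFun_div hx _
  have hf_nonneg : 0 ≤ᵐ[ν] f := by
    filter_upwards [hp0, hq0] with x hpx hqx
    exact mul_nonneg hqx.le (klFun_nonneg (div_nonneg hpx hqx.le))
  have hf_int : Integrable f ν := (((hplogp.sub hplogq).sub hp).add hq).congr hf_eq.symm
  have hf_integral : ∫ x, f x ∂ν = ∫ x, p x * log (p x) ∂ν - ∫ x, p x * log (q x) ∂ν := by
    rw [integral_congr_ae hf_eq,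
      integral_add (f := fun x => p x * log (p x) - p x * log (q x) - p x)
        ((hplogp.sub hplogq).sub hp) hq,
      integral_sub (f := fun x => p x * log (p x) - p x * log (q x)) (hplogp.sub hplogq) hp,
      integral_sub hplogp hplogq, hpq]
    ring
  have hf_zero : f =ᵐ[ν] 0 ↔ p =ᵐ[ν] q := by
    refine Filter.eventually_congr ?_
    filter_upwards [hp0, hq0] with x hpx hqx
    simp [f, hqx.ne', klFun_eq_zero_iff (div_nonneg hpx hqx.le), div_eq_one_iff_eq hqx.ne']
  rw [← hf_zero, ← integral_eq_zero_iff_of_nonneg_ae hf_nonneg hf_int, hf_integral]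
  have := integral_nonneg_of_ae hf_nonneg
  constructor
  · linarith
  · constructor <;> intro <;> linarith

lemma integral_sq_mul_gaussianPDFReal (μ : ℝ) {v : ℝ≥0} (hv : v ≠ 0) :
    ∫ x, (x - μ) ^ 2 * gaussianPDFReal μ v x = v := by
  have h := variance_fun_id_gaussianReal (μ := μ) (v := v)
  rw [variance_eq_integral measurable_id'.aemeasurable, integral_id_gaussianReal,
    integral_gaussianReal_eq_integral_smul hv] at h
  simpa [mul_comm] using h

section gaussianPdf

variable {μ σ : ℝ}

lemma gaussianPdf_eq_gaussianPDFReal (μ σ : ℝ) :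
    gaussianPdf μ σ = gaussianPDFReal μ ⟨σ ^ 2, sq_nonneg σ⟩ := by
  ext x
  simp only [gaussianPdf, gaussianPDFReal, one_div]
  rfl

lemma mk_sq_ne_zero (hσ : σ ≠ 0) : (⟨σ ^ 2, sq_nonneg σ⟩ : ℝ≥0) ≠ 0 := by
  simpa [← NNReal.coe_ne_zero] using hσ

lemma gaussianPdf_pos (hσ : σ ≠ 0) (x : ℝ) : 0 < gaussianPdf μ σ x := by
  rw [gaussianPdf_eq_gaussianPDFReal]
  exact gaussianPDFReal_pos _ _ _ (mk_sq_ne_zero hσ)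

lemma integrable_gaussianPdf (μ σ : ℝ) : Integrable (gaussianPdf μ σ) := by
  rw [gaussianPdf_eq_gaussianPDFReal]
  exact integrable_gaussianPDFReal _ _

lemma integral_gaussianPdf (hσ : σ ≠ 0) : ∫ x, gaussianPdf μ σ x = 1 := by
  rw [gaussianPdf_eq_gaussianPDFReal]
  exact integral_gaussianPDFReal_eq_one _ (mk_sq_ne_zero hσ)

lemma integral_sq_mul_gaussianPdf (hσ : σ ≠ 0) :
    ∫ x, (x - μ) ^ 2 * gaussianPdf μ σ x = σ ^ 2 := by
  rw [gaussianPdf_eq_gaussianPDFReal]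
  exact integral_sq_mul_gaussianPDFReal _ (mk_sq_ne_zero hσ)

lemma integrable_sq_mul_gaussianPdf (hσ : σ ≠ 0) :
    Integrable fun x => (x - μ) ^ 2 * gaussianPdf μ σ x :=
  .of_integral_ne_zero <| by simpa [integral_sq_mul_gaussianPdf hσ] using hσ

lemma log_gaussianPdf (hσ : σ ≠ 0) (x : ℝ) :
    log (gaussianPdf μ σ x) = -log √(2 * π * σ ^ 2) - (x - μ) ^ 2 / (2 * σ ^ 2) := by
  have hsqrt : √(2 * π * σ ^ 2) ≠ 0 := by positivity
  rw [gaussianPdf, log_mul (by positivity) (exp_ne_zero _), log_exp, one_div, log_inv]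
  ring

lemma mul_log_gaussianPdf (hσ : σ ≠ 0) (p : ℝ → ℝ) :
    (fun x => p x * log (gaussianPdf μ σ x)) =
      fun x => -log √(2 * π * σ ^ 2) * p x - (2 * σ ^ 2)⁻¹ * ((x - μ) ^ 2 * p x) := by
  ext x
  rw [log_gaussianPdf hσ]
  ring

lemma integrable_mul_log_gaussianPdf (hσ : σ ≠ 0) {p : ℝ → ℝ} (hp : Integrable p)
    (hvp : Integrable fun x => (x - μ) ^ 2 * p x) :
    Integrable fun x => p x * log (gaussianPdf μ σ x) := by
  rw [mul_log_gaussianPdf hσ]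
  exact (hp.const_mul _).sub (hvp.const_mul _)

lemma integral_mul_log_gaussianPdf (hσ : σ ≠ 0) {p : ℝ → ℝ} (hp : Integrable p)
    (h1 : ∫ x, p x = 1) (hvp : Integrable fun x => (x - μ) ^ 2 * p x)
    (hvar : ∫ x, (x - μ) ^ 2 * p x = σ ^ 2) :
    ∫ x, p x * log (gaussianPdf μ σ x) = -log √(2 * π * σ ^ 2) - 1 / 2 := by
  rw [mul_log_gaussianPdf hσ, integral_sub (hp.const_mul _) (hvp.const_mul _),
    integral_const_mul, integral_const_mul, h1, hvar]
  field_simp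

end gaussianPdf

theorem gaussian_maximizes_entropy_general (μ σ : ℝ) (hσ : 0 < σ)
    (p : ℝ → ℝ) (hp0 : ∀ x, 0 ≤ p x)
    (hint : Integrable p) (h1 : ∫ x, p x = 1)
    (hvint : Integrable (fun x => (x - μ) ^ 2 * p x))
    (hvar : ∫ x, (x - μ) ^ 2 * p x = σ ^ 2)
    (hent : Integrable (fun x => p x * Real.log (p x))) :
    (-∫ x, p x * Real.log (p x)) ≤
        -∫ x, gaussianPdf μ σ x * Real.log (gaussianPdf μ σ x) ∧
      ((-∫ x, p x * Real.log (p x)) =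
          -∫ x, gaussianPdf μ σ x * Real.log (gaussianPdf μ σ x) ↔
        p =ᵐ[volume] gaussianPdf μ σ) := by
  have hσ0 := hσ.ne'
  have hcross : ∫ x, gaussianPdf μ σ x * log (gaussianPdf μ σ x) =
      ∫ x, p x * log (gaussianPdf μ σ x) := by
    rw [integral_mul_log_gaussianPdf hσ0 hint h1 hvint hvar,
      integral_mul_log_gaussianPdf hσ0 (integrable_gaussianPdf μ σ) (integral_gaussianPdf hσ0)
        (integrable_sq_mul_gaussianPdf hσ0) (integral_sq_mul_gaussianPdf hσ0)]
  obtain ⟨hle, hiff⟩ := integral_mul_log_le_integral_mul_log (ae_of_all _ hp0)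
    (ae_of_all _ (gaussianPdf_pos hσ0)) hint (integrable_gaussianPdf μ σ)
    (h1.trans (integral_gaussianPdf hσ0).symm) hent
    (integrable_mul_log_gaussianPdf hσ0 hint hvint)
  rw [hcross, neg_le_neg_iff, neg_inj, eq_comm]
  exact ⟨hle, hiff⟩

theorem gaussian_maximizes_entropy (μ σ : ℝ) (hσ : 0 < σ)
    (p : ℝ → ℝ) (hmeas : Measurable p) (hp0 : ∀ x, 0 ≤ p x)
    (hint : Integrable p) (h1 : ∫ x, p x = 1)
    (hxint : Integrable (fun x => x * p x)) (hmean : ∫ x, x * p x = μ)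
    (hvint : Integrable (fun x => (x - μ) ^ 2 * p x))
    (hvar : ∫ x, (x - μ) ^ 2 * p x = σ ^ 2)
    (hent : Integrable (fun x => p x * Real.log (p x))) :
    (-∫ x, p x * Real.log (p x)) ≤
        -∫ x, gaussianPdf μ σ x * Real.log (gaussianPdf μ σ x) ∧
      ((-∫ x, p x * Real.log (p x)) =
          -∫ x, gaussianPdf μ σ x * Real.log (gaussianPdf μ σ x) ↔
        p =ᵐ[volume] gaussianPdf μ σ) :=
  gaussian_maximizes_entropy_general μ σ hσ p hp0 hint h1 hvint hvar hent
end
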